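/- arXiv:math/0002157 — 2 statements merged into one kernel-verified Lean document; each statement's English description precedes it below -/
import Mathlib

section
/- For any A-module P and k ≥ 0, the functor Q ↦ Diff_k(P,Q) from A-modules to A-modules is representable: there exists an A-module J^k(P) (the k-jet module) together with a differential operator j_k : P → J^k(P) of order ≤ k, such that for every A-module Q and every differential operator Δ : P → Q of order ≤ k, there exists a unique A-linear map f : J^k(P) → Q with Δ = f ∘ j_k. -/
/-- The operator `δ_a` on `K`-linear maps between `A`-modules:
`(δ_a Φ)(p) = Φ(a • p) - a • Φ(p)`. -/
def delta {K A P Q : Type*} [CommRing K] [CommRing A] [Algebra K A]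
    [AddCommGroup P] [Module K P] [Module A P] [IsScalarTower K A P]
    [AddCommGroup Q] [Module K Q] [Module A Q] [IsScalarTower K A Q]
    (a : A) (Φ : P →ₗ[K] Q) : P →ₗ[K] Q where
  toFun p := Φ (a • p) - a • Φ p
  map_add' p q := by simp [smul_add]; abel
  map_smul' k p := by
    simp only [RingHom.id_apply, map_smul, smul_sub]
    rw [smul_comm a k p, smul_comm a k (Φ p)]
    simp

/-- `Δ` is a differential operator of order `≤ s` if every composite
`δ_{a₀} ∘ ⋯ ∘ δ_{a_s}` annihilates `Δ`. -/
def IsDO {K A P Q : Type*} [CommRing K] [CommRing A] [Algebra K A]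
    [AddCommGroup P] [Module K P] [Module A P] [IsScalarTower K A P]
    [AddCommGroup Q] [Module K Q] [Module A Q] [IsScalarTower K A Q] :
    ℕ → (P →ₗ[K] Q) → Prop
  | 0, Δ => ∀ a : A, delta a Δ = 0
  | (s + 1), Δ => ∀ a : A, IsDO (A := A) s (delta a Δ)

universe u

/-- Data exhibiting a k-jet module of P: an A-module J^k(P) together with a
universal differential operator j_k : P → J^k(P) of order ≤ k through which
every order ≤ k differential operator out of P factors uniquely by an
A-linear map. -/
structure JetUniversal (K A : Type u) [CommRing K] [CommRing A] [Algebra K A]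
    (P : Type u) [AddCommGroup P] [Module K P] [Module A P] [IsScalarTower K A P]
    (k : ℕ) : Type (u + 1) where
  J : Type u
  [addCommGroup : AddCommGroup J]
  [moduleK : Module K J]
  [moduleA : Module A J]
  [tower : IsScalarTower K A J]
  jk : P →ₗ[K] J
  jk_isDO : IsDO (A := A) k jk
  universal : ∀ (Q : Type u) [AddCommGroup Q] [Module K Q] [Module A Q]
      [IsScalarTower K A Q] (Δ : P →ₗ[K] Q), IsDO (A := A) k Δ →
      ∃! f : J →ₗ[A] Q, ∀ p : P, f (jk p) = Δ p

/-!
The jet module is the free object `A ⊗[K] P` on `P`, divided by the `A`-submodule spanned by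
all values `(δ_{a₀} ∘ ⋯ ∘ δ_{a_k})(1 ⊗ -)(p)`. An `A`-linear map `g` out of `A ⊗[K] P` kills
these relations exactly when `g ∘ (1 ⊗ -)` is a differential operator of order `≤ k`, because
`δ_a` commutes with post-composition by `A`-linear maps. Every `K`-linear `Δ : P → Q` is
`g ∘ (1 ⊗ -)` for a unique `A`-linear `g`, which gives the universal property.
-/

open TensorProduct

section DifferentialOperators

variable {K A P M Q : Type*} [CommRing K] [CommRing A] [Algebra K A]
    [AddCommGroup P] [Module K P] [Module A P] [IsScalarTower K A P]
    [AddCommGroup M] [Module K M] [Module A M] [IsScalarTower K A M]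
    [AddCommGroup Q] [Module K Q] [Module A Q] [IsScalarTower K A Q]

/-- `multiDelta [a₀, …, aₛ] Δ = (δ_{aₛ} ∘ ⋯ ∘ δ_{a₀}) Δ`. -/
def multiDelta : List A → (P →ₗ[K] M) → (P →ₗ[K] M)
  | [], Δ => Δ
  | a :: l, Δ => multiDelta l (delta a Δ)

theorem isDO_iff_multiDelta_eq_zero (s : ℕ) (Δ : P →ₗ[K] M) :
    IsDO (A := A) s Δ ↔ ∀ l : List A, l.length = s + 1 → multiDelta l Δ = 0 := by
  induction s generalizing Δ with
  | zero =>
    refine ⟨fun h l hl => ?_, fun h a => h [a] rfl⟩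
    obtain ⟨a, rfl⟩ := List.length_eq_one_iff.mp hl
    exact h a
  | succ s ih =>
    refine ⟨fun h l hl => ?_, fun h a => (ih _).2 fun l hl => h (a :: l) (by simp [hl])⟩
    obtain ⟨a, l, rfl⟩ := List.exists_cons_of_length_eq_add_one hl
    exact (ih _).1 (h a) l (Nat.succ_injective hl)

theorem delta_restrictScalars_comp (g : M →ₗ[A] Q) (a : A) (Φ : P →ₗ[K] M) :
    delta a (g.restrictScalars K ∘ₗ Φ) = g.restrictScalars K ∘ₗ delta a Φ := by
  ext p
  simp [delta]

theorem multiDelta_restrictScalars_comp (g : M →ₗ[A] Q) (l : List A) (Φ : P →ₗ[K] M) :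
    multiDelta l (g.restrictScalars K ∘ₗ Φ) = g.restrictScalars K ∘ₗ multiDelta l Φ := by
  induction l generalizing Φ with
  | nil => rfl
  | cons a l ih => simp only [multiDelta, delta_restrictScalars_comp, ih]

variable (A) in
def diffRelations (k : ℕ) (Φ : P →ₗ[K] M) : Submodule A M :=
  Submodule.span A {x | ∃ (l : List A) (p : P), l.length = k + 1 ∧ multiDelta l Φ p = x}

theorem isDO_restrictScalars_comp_iff (k : ℕ) (Φ : P →ₗ[K] M) (g : M →ₗ[A] Q) :
    IsDO (A := A) k (g.restrictScalars K ∘ₗ Φ) ↔ diffRelations A k Φ ≤ LinearMap.ker g := by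
  simp only [isDO_iff_multiDelta_eq_zero, multiDelta_restrictScalars_comp, diffRelations,
    Submodule.span_le, Set.subset_def, Set.mem_ofPred_eq, SetLike.mem_coe, LinearMap.mem_ker,
    LinearMap.ext_iff, LinearMap.comp_apply, LinearMap.restrictScalars_apply,
    LinearMap.zero_apply]
  exact ⟨fun h _ ⟨l, p, hl, hx⟩ => hx ▸ h l hl p, fun h l hl p => h _ ⟨l, p, hl, rfl⟩⟩

end DifferentialOperators

section Jets

variable (K A P : Type*) [CommRing K] [CommRing A] [Algebra K A]
    [AddCommGroup P] [Module K P] [Module A P] [IsScalarTower K A P] (k : ℕ)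

abbrev JetModule : Type _ :=
  (A ⊗[K] P) ⧸ diffRelations A k (TensorProduct.mk K A P 1)

def jet : P →ₗ[K] JetModule K A P k :=
  (Submodule.mkQ _).restrictScalars K ∘ₗ TensorProduct.mk K A P 1

theorem isDO_jet : IsDO (A := A) k (jet K A P k) :=
  (isDO_restrictScalars_comp_iff k _ _).2 (Submodule.ker_mkQ _).ge

variable {K A P k} {Q : Type*} [AddCommGroup Q] [Module K Q] [Module A Q] [IsScalarTower K A Q]

theorem jet_hom_ext {f g : JetModule K A P k →ₗ[A] Q}
    (h : ∀ p, f (jet K A P k p) = g (jet K A P k p)) : f = g := by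
  refine Submodule.linearMap_qext _ ((LinearMap.liftBaseChangeEquiv A).symm.injective ?_)
  ext p
  exact h p

theorem exists_comp_jet_eq {Δ : P →ₗ[K] Q} (hΔ : IsDO (A := A) k Δ) :
    ∃ f : JetModule K A P k →ₗ[A] Q, ∀ p, f (jet K A P k p) = Δ p := by
  have hlift : (Δ.liftBaseChange A).restrictScalars K ∘ₗ TensorProduct.mk K A P 1 = Δ := by
    ext p
    simp
  rw [← hlift, isDO_restrictScalars_comp_iff] at hΔ
  exact ⟨Submodule.liftQ _ _ hΔ, fun p => by simp [jet]⟩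

end Jets

/-- For every A-module P and k ≥ 0 the functor Q ↦ Diff_k(P,Q) is
representable: the k-jet module exists. -/
theorem jet_exists (K A : Type u) [CommRing K] [CommRing A] [Algebra K A]
    (P : Type u) [AddCommGroup P] [Module K P] [Module A P] [IsScalarTower K A P]
    (k : ℕ) : Nonempty (JetUniversal K A P k) :=
  ⟨{ J := JetModule K A P k
     jk := jet K A P k
     jk_isDO := isDO_jet K A P k
     universal := fun _ _ _ _ _ _ hΔ => by
       obtain ⟨f, hf⟩ := exists_comp_jet_eq hΔ
       exact ⟨f, hf, fun g hg => jet_hom_ext fun p => (hg p).trans (hf p).symm⟩ }⟩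
end

section
/- For A-modules P and Q, there is a natural A-module isomorphism Diff_s(P, Q) ≅ Hom_A(P, Diff_s⁺(A, Q)), sending a differential operator Δ : P → Q of order ≤ s to the map p ↦ (a ↦ Δ(a·p)); here the left-hand side carries the module structure (a·Δ)(p) = a·Δ(p), and Hom_A is taken with respect to the 'plus' structure (a⁺·∇)(x) = ∇(a·x) on Diff_s⁺(A,Q), with the module structure on the Hom given by the 'left' structure of Diff_s(A,Q). -/
section Aux
variable {K A P Q : Type*} [CommRing K] [CommRing A] [Algebra K A]
    [AddCommGroup P] [Module K P] [Module A P] [IsScalarTower K A P]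
    [AddCommGroup Q] [Module K Q] [Module A Q] [IsScalarTower K A Q]

lemma delta_apply (a : A) (Φ : P →ₗ[K] Q) (p : P) :
    delta a Φ p = Φ (a • p) - a • Φ p := rfl

/-- `F Δ p a = Δ (a • p)`. -/
def Fmap (Δ : P →ₗ[K] Q) : P →ₗ[K] (A →ₗ[K] Q) where
  toFun p :=
    { toFun := fun a => Δ (a • p)
      map_add' := by intro x y; simp [add_smul]
      map_smul' := by intro k x; simp [smul_assoc] }
  map_add' p q := by ext a; simp [smul_add]
  map_smul' k p := by ext a; simp [smul_comm a k p]

@[simp] lemma Fmap_apply (Δ : P →ₗ[K] Q) (p : P) (a : A) :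
    Fmap Δ p a = Δ (a • p) := rfl

/-- `G f p = f p 1`. -/
def Gmap (f : P →ₗ[K] (A →ₗ[K] Q)) : P →ₗ[K] Q where
  toFun p := f p 1
  map_add' p q := by simp
  map_smul' k p := by simp

@[simp] lemma Gmap_apply (f : P →ₗ[K] (A →ₗ[K] Q)) (p : P) : Gmap f p = f p 1 := rfl

lemma delta_Fmap (b : A) (Δ : P →ₗ[K] Q) (p : P) :
    delta b (Fmap (A := A) Δ p) = Fmap (A := A) (delta b Δ) p := by
  ext a
  simp [delta_apply, mul_smul, mul_comm b a]
  rw [smul_comm]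

lemma isDO_Fmap : ∀ (s : ℕ) (Δ : P →ₗ[K] Q), IsDO (A := A) s Δ →
    ∀ p, IsDO (A := A) s (Fmap (A := A) Δ p) := by
  intro s
  induction s with
  | zero =>
    intro Δ h p b
    rw [delta_Fmap, h b]
    ext a; simp
  | succ n ih =>
    intro Δ h p b
    rw [delta_Fmap]
    exact ih _ (h b) p

/-- postcompose with `delta a`. -/
def gmap (a : A) (f : P →ₗ[K] (A →ₗ[K] Q)) : P →ₗ[K] (A →ₗ[K] Q) where
  toFun p := delta a (f p)
  map_add' p q := by ext x; simp [delta_apply]; abel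
  map_smul' k p := by ext x; simp [delta_apply, smul_sub, smul_comm a k]

lemma delta_comp_mulLeft (a b : A) (Φ : A →ₗ[K] Q) :
    delta a (Φ.comp (LinearMap.mulLeft K b)) = (delta a Φ).comp (LinearMap.mulLeft K b) := by
  ext x
  simp [delta_apply, smul_eq_mul]
  ring_nf

lemma isDO_Gmap : ∀ (s : ℕ) (f : P →ₗ[K] (A →ₗ[K] Q)),
    (∀ p, IsDO (A := A) s (f p)) →
    (∀ (a : A) (p : P), f (a • p) = (f p).comp (LinearMap.mulLeft K a)) →
    IsDO (A := A) s (Gmap f) := by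
  intro s
  induction s with
  | zero =>
    intro f h1 h2 a
    ext p
    have : delta a (f p) = 0 := h1 p a
    simp [delta_apply, h2 a p]
    have := congrArg (fun Φ : A →ₗ[K] Q => Φ 1) this
    simpa [delta_apply, smul_eq_mul] using this
  | succ n ih =>
    intro f h1 h2 a
    have key : delta a (Gmap f) = Gmap (gmap a f) := by
      ext p
      simp [delta_apply, gmap, h2 a p, smul_eq_mul]
    rw [key]
    refine ih (gmap a f) (fun p => h1 p a) ?_
    intro b p
    show delta a (f (b • p)) = _
    rw [h2 b p, delta_comp_mulLeft]
    rfl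

end Aux

/-- Diff_s(P,Q) ≅ Hom_A(P, Diff_s⁺(A,Q)): a differential operator Δ : P → Q of
order ≤ s corresponds to the map p ↦ (a ↦ Δ(a • p)).

The right hand side consists of the K-linear maps f : P → (A →ₗ[K] Q) such
that each f p is a differential operator of order ≤ s and f is A-linear for
the plus structure on Diff_s⁺(A,Q), i.e. f (a • p) = (f p) ∘ (x ↦ a·x).

The correspondence is bijective, additive, and A-linear for the left module
structure (a·Δ)(p) = a·Δ(p) on the left and the pointwise left structure on
the Hom on the right. -/

theorem diff_equiv_hom_diffPlus
    {K A P Q : Type*} [CommRing K] [CommRing A] [Algebra K A]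
    [AddCommGroup P] [Module K P] [Module A P] [IsScalarTower K A P]
    [AddCommGroup Q] [Module K Q] [Module A Q] [IsScalarTower K A Q] (s : ℕ) :
    ∃ e : {Δ : P →ₗ[K] Q // IsDO (A := A) s Δ} ≃
          {f : P →ₗ[K] (A →ₗ[K] Q) //
            (∀ p : P, IsDO (A := A) s (f p)) ∧
            (∀ (a : A) (p : P), f (a • p) = (f p).comp (LinearMap.mulLeft K a))},
      (∀ Δ (p : P) (a : A), (e Δ).val p a = Δ.val (a • p)) ∧
      (∀ Δ Δ' ΔΔ', ΔΔ'.val = Δ.val + Δ'.val → (e ΔΔ').val = (e Δ).val + (e Δ').val) ∧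
      (∀ (c : A) (Δ Δ'), Δ'.val = c • Δ.val → (e Δ').val = c • (e Δ).val) := by
  refine ⟨{ toFun := fun Δ => ⟨Fmap Δ.val, isDO_Fmap s Δ.val Δ.property, ?_⟩
            invFun := fun f => ⟨Gmap f.val, isDO_Gmap s f.val f.property.1 f.property.2⟩
            left_inv := ?_
            right_inv := ?_ }, ?_, ?_, ?_⟩
  · intro a p
    ext x
    simp [mul_smul, mul_comm a x]
  · intro Δ
    apply Subtype.ext
    ext p
    simp
  · intro f
    apply Subtype.ext
    ext p a
    have := congrArg (fun Φ : A →ₗ[K] Q => Φ 1) (f.property.2 a p)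
    simpa [smul_eq_mul] using this
  · intro Δ p a
    rfl
  · intro Δ Δ' ΔΔ' h
    ext p a
    simp [h]
  · intro c Δ Δ' h
    ext p a
    simp [h, smul_comm]
end
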